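/- arXiv:2503.19305 — 4 statements merged into one kernel-verified Lean document; each statement's English description precedes it below -/
import Mathlib

section
/- If X is a right A-actegory such that for each object X the functor X ◁ - : A → X has a right adjoint Hom(X,-), then X carries the structure of an A-enriched category, with hom-objects Hom(X,Y), composition m : Hom(X,Y) ⊗ Hom(Y,Z) → Hom(X,Z) defined as the transpose of a◁ ∘ (ε ◁ 1) ∘ ε, and identity id : I → Hom(X,X) defined as the transpose of u◁. -/
open CategoryTheory MonoidalCategory

universe v₁ u₁ v₂ u₂

/-- A right `A`-actegory: an action functor `◁ : X × A → X` (curried) with coherent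
associativity and unit isomorphisms. -/
structure RightActegory (A : Type u₁) (X : Type u₂) [Category.{v₁} A] [MonoidalCategory A]
    [Category.{v₂} X] where
  act : X ⥤ A ⥤ X
  assoc : ∀ (x : X) (a b : A),
    (act.obj x).obj (a ⊗ b) ≅ (act.obj ((act.obj x).obj a)).obj b
  unitor : ∀ x : X, (act.obj x).obj (𝟙_ A) ≅ x
  assoc_natural_left : ∀ {x y : X} (f : x ⟶ y) (a b : A),
    (act.map f).app (a ⊗ b) ≫ (assoc y a b).hom
      = (assoc x a b).hom ≫ (act.map ((act.map f).app a)).app b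
  assoc_natural_middle : ∀ (x : X) {a a' : A} (g : a ⟶ a') (b : A),
    (act.obj x).map (g ⊗ₘ 𝟙 b) ≫ (assoc x a' b).hom
      = (assoc x a b).hom ≫ (act.map ((act.obj x).map g)).app b
  assoc_natural_right : ∀ (x : X) (a : A) {b b' : A} (h : b ⟶ b'),
    (act.obj x).map (𝟙 a ⊗ₘ h) ≫ (assoc x a b').hom
      = (assoc x a b).hom ≫ (act.obj ((act.obj x).obj a)).map h
  unitor_natural : ∀ {x y : X} (f : x ⟶ y),
    (act.map f).app (𝟙_ A) ≫ (unitor y).hom = (unitor x).hom ≫ f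
  pentagon : ∀ (x : X) (a b c : A),
    (act.obj x).map (α_ a b c).inv ≫ (assoc x (a ⊗ b) c).hom
        ≫ (act.map (assoc x a b).hom).app c
      = (assoc x a (b ⊗ c)).hom ≫ (assoc ((act.obj x).obj a) b c).hom
  triangle_right : ∀ (x : X) (a : A),
    (act.obj x).map (ρ_ a).hom
      = (assoc x a (𝟙_ A)).hom ≫ (unitor ((act.obj x).obj a)).hom
  triangle_left : ∀ (x : X) (a : A),
    (act.obj x).map (λ_ a).hom
      = (assoc x (𝟙_ A) a).hom ≫ (act.map (unitor x).hom).app a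

variable {A : Type u₁} {X : Type u₂} [Category.{v₁} A] [MonoidalCategory A] [Category.{v₂} X]

/-- The identity element `id : I ⟶ Hom(x,x)`: the adjoint transpose of the unitor
`u◁ : x ◁ I ⟶ x`. -/
noncomputable def actEId (R : RightActegory A X) (H : X → X ⥤ A)
    (adj : ∀ x : X, R.act.obj x ⊣ H x) (x : X) : 𝟙_ A ⟶ (H x).obj x :=
  (adj x).homEquiv (𝟙_ A) x (R.unitor x).hom

/-- The composition morphism `m : Hom(x,y) ⊗ Hom(y,z) ⟶ Hom(x,z)`: the adjoint transpose of
`a◁ ≫ (ε ◁ 1) ≫ ε`. -/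
noncomputable def actEComp (R : RightActegory A X) (H : X → X ⥤ A)
    (adj : ∀ x : X, R.act.obj x ⊣ H x) (x y z : X) :
    (H x).obj y ⊗ (H y).obj z ⟶ (H x).obj z :=
  (adj x).homEquiv ((H x).obj y ⊗ (H y).obj z) z
    ((R.assoc x ((H x).obj y) ((H y).obj z)).hom ≫
      (R.act.map ((adj x).counit.app y)).app ((H y).obj z) ≫ (adj y).counit.app z)

/-- The defining (uncurried) property of `actEId`: `(x ◁ id) ≫ ε = u◁`. -/
lemma actEId_uncurry (R : RightActegory A X) (H : X → X ⥤ A)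
    (adj : ∀ x : X, R.act.obj x ⊣ H x) (x : X) :
    (R.act.obj x).map (actEId R H adj x) ≫ (adj x).counit.app x = (R.unitor x).hom := by
  have := ((adj x).homEquiv (𝟙_ A) x).symm_apply_apply (R.unitor x).hom
  rw [Adjunction.homEquiv_counit] at this
  exact this

/-- The defining (uncurried) property of `actEComp`: `(x ◁ m) ≫ ε = a◁ ≫ (ε ◁ 1) ≫ ε`. -/
lemma actEComp_uncurry (R : RightActegory A X) (H : X → X ⥤ A)
    (adj : ∀ x : X, R.act.obj x ⊣ H x) (x y z : X) :
    (R.act.obj x).map (actEComp R H adj x y z) ≫ (adj x).counit.app z =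
      (R.assoc x ((H x).obj y) ((H y).obj z)).hom ≫
        (R.act.map ((adj x).counit.app y)).app ((H y).obj z) ≫ (adj y).counit.app z := by
  have := ((adj x).homEquiv ((H x).obj y ⊗ (H y).obj z) z).symm_apply_apply
    ((R.assoc x ((H x).obj y) ((H y).obj z)).hom ≫
      (R.act.map ((adj x).counit.app y)).app ((H y).obj z) ≫ (adj y).counit.app z)
  rw [Adjunction.homEquiv_counit] at this
  exact this

/-- a right `A`-actegory with hom-objects (`x ◁ - ⊣ Hom(x,-)`) is an
`A`-enriched category: the composition `m` (transpose of `a◁ (ε ◁ 1) ε`) and identity `id`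
(transpose of `u◁`) satisfy the unit and associativity axioms of an enriched category. -/
theorem rightActegoryWithHom_enriched (R : RightActegory A X) (H : X → X ⥤ A)
    (adj : ∀ x : X, R.act.obj x ⊣ H x) :
    (∀ x y : X, (λ_ ((H x).obj y)).inv ≫ (actEId R H adj x ⊗ₘ 𝟙 ((H x).obj y)) ≫
        actEComp R H adj x x y = 𝟙 ((H x).obj y)) ∧
    (∀ x y : X, (ρ_ ((H x).obj y)).inv ≫ (𝟙 ((H x).obj y) ⊗ₘ actEId R H adj y) ≫
        actEComp R H adj x y y = 𝟙 ((H x).obj y)) ∧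
    (∀ w x y z : X,
      (α_ ((H w).obj x) ((H x).obj y) ((H y).obj z)).hom ≫
          (𝟙 ((H w).obj x) ⊗ₘ actEComp R H adj x y z) ≫ actEComp R H adj w x z
        = (actEComp R H adj w x y ⊗ₘ 𝟙 ((H y).obj z)) ≫ actEComp R H adj w y z) := by
  refine ⟨fun x y => ?_, fun x y => ?_, fun w x y z => ?_⟩
  · apply ((adj x).homEquiv _ _).symm.injective
    rw [Adjunction.homEquiv_counit, Adjunction.homEquiv_counit]
    simp only [Functor.map_comp, CategoryTheory.Functor.map_id, Category.id_comp, Category.assoc]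
    rw [actEComp_uncurry R H adj x x y,
      reassoc_of% R.assoc_natural_middle x (actEId R H adj x) ((H x).obj y),
      ← NatTrans.comp_app_assoc, ← R.act.map_comp, actEId_uncurry R H adj x,
      ← reassoc_of% R.triangle_left x ((H x).obj y),
      ← Functor.map_comp_assoc, Iso.inv_hom_id, CategoryTheory.Functor.map_id, Category.id_comp]
  · apply ((adj x).homEquiv _ _).symm.injective
    rw [Adjunction.homEquiv_counit, Adjunction.homEquiv_counit]
    simp only [Functor.map_comp, CategoryTheory.Functor.map_id, Category.id_comp, Category.assoc]
    rw [actEComp_uncurry R H adj x y y,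
      reassoc_of% R.assoc_natural_right x ((H x).obj y) (actEId R H adj y),
      reassoc_of% (R.act.map ((adj x).counit.app y)).naturality (actEId R H adj y),
      actEId_uncurry R H adj y,
      R.unitor_natural (y := y) ((adj x).counit.app y)]
    simp only [CategoryTheory.Functor.comp_obj]
    rw [← reassoc_of% R.triangle_right x ((H x).obj y),
      ← Functor.map_comp_assoc, Iso.inv_hom_id, CategoryTheory.Functor.map_id, Category.id_comp]
  · apply ((adj w).homEquiv _ _).symm.injective
    rw [Adjunction.homEquiv_counit, Adjunction.homEquiv_counit]
    simp only [Functor.map_comp, Category.assoc]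
    rw [actEComp_uncurry R H adj w x z,
      reassoc_of% R.assoc_natural_right w ((H w).obj x) (actEComp R H adj x y z),
      reassoc_of% (R.act.map ((adj w).counit.app x)).naturality (actEComp R H adj x y z),
      actEComp_uncurry R H adj x y z,
      reassoc_of% R.assoc_natural_left ((adj w).counit.app x) ((H x).obj y) ((H y).obj z),
      ← reassoc_of% R.pentagon w ((H w).obj x) ((H x).obj y) ((H y).obj z),
      ← Functor.map_comp_assoc, Iso.hom_inv_id, CategoryTheory.Functor.map_id, Category.id_comp,
      actEComp_uncurry R H adj w y z,
      reassoc_of% R.assoc_natural_middle w (actEComp R H adj w x y) ((H y).obj z)]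
    conv_rhs => rw [← NatTrans.comp_app_assoc, ← R.act.map_comp, actEComp_uncurry R H adj w x y]
    simp only [Functor.map_comp, NatTrans.comp_app, Category.assoc]
end

section
/- If X is a right A-actegory with hom-objects Hom(X,-) right adjoint to X ◁ -, then the induced A-enriched structure on X has copowers: with η := the unit of the adjunction A → Hom(X, X ◁ A), the combinators f ↦ (a◁ ∘ f♯)♭ and g ↦ (a◁⁻¹ ∘ g♯)♭ give a bijection between maps B → Hom(X ◁ A, Y) and maps A ⊗ B → Hom(X,Y), and moreover the forward direction equals f ↦ (η ⊗ f) ∘ m. -/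
open CategoryTheory MonoidalCategory

universe v₁ u₁ v₂ u₂

variable {A : Type u₁} {X : Type u₂} [Category.{v₁} A] [MonoidalCategory A] [Category.{v₂} X]

/-- The combinator `(-)↓ : (B ⟶ Hom(x ◁ a, y)) → (A ⊗ B ⟶ Hom(x, y))`,
`f ↦ (a◁ ≫ f♯)♭`. -/
noncomputable def actDown (R : RightActegory A X) (H : X → X ⥤ A)
    (adj : ∀ x : X, R.act.obj x ⊣ H x) (x : X) (a : A) {b : A} {y : X}
    (f : b ⟶ (H ((R.act.obj x).obj a)).obj y) : a ⊗ b ⟶ (H x).obj y :=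
  (adj x).homEquiv (a ⊗ b) y
    ((R.assoc x a b).hom ≫ ((adj ((R.act.obj x).obj a)).homEquiv b y).symm f)

/-- The combinator `(-)↑ : (A ⊗ B ⟶ Hom(x, y)) → (B ⟶ Hom(x ◁ a, y))`,
`g ↦ (a◁⁻¹ ≫ g♯)♭`. -/
noncomputable def actUp (R : RightActegory A X) (H : X → X ⥤ A)
    (adj : ∀ x : X, R.act.obj x ⊣ H x) (x : X) (a : A) {b : A} {y : X}
    (g : a ⊗ b ⟶ (H x).obj y) : b ⟶ (H ((R.act.obj x).obj a)).obj y :=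
  (adj ((R.act.obj x).obj a)).homEquiv b y
    ((R.assoc x a b).inv ≫ ((adj x).homEquiv (a ⊗ b) y).symm g)

/-- a right `A`-actegory with hom-objects has copowers: with `η` the unit of
the adjunction `x ◁ - ⊣ Hom(x,-)`, the combinators `f ↦ (a◁ f♯)♭` and `g ↦ (a◁⁻¹ g♯)♭` are
mutually inverse bijections between maps `B ⟶ Hom(x ◁ a, y)` and maps `A ⊗ B ⟶ Hom(x, y)`,
and the forward direction is given by `f ↦ (η ⊗ f) ≫ m`. -/
theorem actegory_has_copowers (R : RightActegory A X) (H : X → X ⥤ A)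
    (adj : ∀ x : X, R.act.obj x ⊣ H x) (x : X) (a : A) (b : A) (y : X) :
    (∀ f : b ⟶ (H ((R.act.obj x).obj a)).obj y,
        actUp R H adj x a (actDown R H adj x a f) = f) ∧
    (∀ g : a ⊗ b ⟶ (H x).obj y,
        actDown R H adj x a (actUp R H adj x a g) = g) ∧
    (∀ f : b ⟶ (H ((R.act.obj x).obj a)).obj y,
        actDown R H adj x a f
          = ((adj x).unit.app a ⊗ₘ f) ≫ actEComp R H adj x ((R.act.obj x).obj a) y) := by
  refine ⟨?_, ?_, ?_⟩
  · intro f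
    simp [actUp, actDown]
  · intro g
    simp [actUp, actDown]
  · intro f
    apply ((adj x).homEquiv (a ⊗ b) y).symm.injective
    rw [actDown, actEComp, Equiv.symm_apply_apply,
      Adjunction.homEquiv_naturality_left_symm]
    erw [Equiv.symm_apply_apply]
    have hη : ∃ η' : a ⟶ (H x).obj ((R.act.obj x).obj a), η' = (adj x).unit.app a :=
      ⟨(adj x).unit.app a, rfl⟩
    obtain ⟨η', hη⟩ := hη
    have hε : ∃ ε' : (R.act.obj x).obj ((H x).obj ((R.act.obj x).obj a)) ⟶ (R.act.obj x).obj a,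
        ε' = (adj x).counit.app ((R.act.obj x).obj a) :=
      ⟨(adj x).counit.app ((R.act.obj x).obj a), rfl⟩
    obtain ⟨ε', hε⟩ := hε
    rw [← hη, ← hε]
    have h1 : (η' ⊗ₘ f)
        = (η' ⊗ₘ 𝟙 b) ≫ (𝟙 ((H x).obj ((R.act.obj x).obj a)) ⊗ₘ f) := by
      rw [tensorHom_comp_tensorHom, Category.comp_id, Category.id_comp]
    rw [h1, Functor.map_comp]
    slice_rhs 2 3 =>
      rw [R.assoc_natural_right x ((H x).obj ((R.act.obj x).obj a)) f]
    slice_rhs 1 2 =>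
      rw [R.assoc_natural_middle x η' b]
    slice_rhs 3 4 =>
      rw [(R.act.map ε').naturality f]
    slice_rhs 2 3 =>
      rw [← NatTrans.comp_app, ← R.act.map_comp, hη, hε,
        (adj x).left_triangle_components a, R.act.map_id]
    simp [Adjunction.homEquiv_counit]
end

section
/- Let X be an A-enriched category equipped with combinators (-)↓ : (B → Hom(X◁A, Y)) → (A ⊗ B → Hom(X,Y)) and (-)↑ in the other direction forming a bijection. Then the existence of a map η : A → Hom(X, X◁A) with f↓ = (η ⊗ f)m for all f is equivalent to the four properties: (a) (1⊗h)(f↓) = (hf)↓, (b) h(f↑) = ((1⊗h)f)↑, (c) (f↓ ⊗ g)m = α((f ⊗ g)m)↓, (d) (f↑ ⊗ g)m = (α(f ⊗ g)m)↑. -/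
open CategoryTheory MonoidalCategory

universe v u w

variable {A : Type u} [Category.{v} A] [MonoidalCategory A]
variable {X : Type w} [EnrichedCategory A X]

/-- for an `A`-enriched category `X` with a copower-candidate object `xa`
(playing the role of `x ◁ a`) and mutually inverse combinators `(-)↓` and `(-)↑` between maps
`B ⟶ Hom(xa, y)` and `A ⊗ B ⟶ Hom(x, y)`, the existence of a unit `η : a ⟶ Hom(x, xa)` with
`f↓ = (η ⊗ f) ≫ m` for all `f` is equivalent to the four combinator properties
(a) `(1 ⊗ h) ≫ f↓ = (h ≫ f)↓`, (b) `h ≫ g↑ = ((1 ⊗ h) ≫ g)↑`,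
(c) `(f↓ ⊗ g) ≫ m = α ≫ ((f ⊗ g) ≫ m)↓`, (d) `(f↑ ⊗ g) ≫ m = (α⁻¹ ≫ (f ⊗ g) ≫ m)↑`. -/
theorem copower_unit_iff_combinator_properties
    (x xa : X) (a : A)
    (dn : ∀ {b : A} {y : X}, (b ⟶ (xa ⟶[A] y)) → (a ⊗ b ⟶ (x ⟶[A] y)))
    (up : ∀ {b : A} {y : X}, (a ⊗ b ⟶ (x ⟶[A] y)) → (b ⟶ (xa ⟶[A] y)))
    (up_dn : ∀ {b : A} {y : X} (f : b ⟶ (xa ⟶[A] y)), up (dn f) = f)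
    (dn_up : ∀ {b : A} {y : X} (g : a ⊗ b ⟶ (x ⟶[A] y)), dn (up g) = g) :
    (∃ η : a ⟶ (x ⟶[A] xa),
        ∀ {b : A} {y : X} (f : b ⟶ (xa ⟶[A] y)), dn f = (η ⊗ₘ f) ≫ eComp A x xa y)
      ↔
    ((∀ {b b' : A} {y : X} (h : b' ⟶ b) (f : b ⟶ (xa ⟶[A] y)),
        (𝟙 a ⊗ₘ h) ≫ dn f = dn (h ≫ f)) ∧
     (∀ {b b' : A} {y : X} (h : b' ⟶ b) (g : a ⊗ b ⟶ (x ⟶[A] y)),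
        h ≫ up g = up ((𝟙 a ⊗ₘ h) ≫ g)) ∧
     (∀ {b c : A} {y z : X} (f : b ⟶ (xa ⟶[A] y)) (g : c ⟶ (y ⟶[A] z)),
        (dn f ⊗ₘ g) ≫ eComp A x y z
          = (α_ a b c).hom ≫ dn ((f ⊗ₘ g) ≫ eComp A xa y z)) ∧
     (∀ {b c : A} {y z : X} (f : a ⊗ b ⟶ (x ⟶[A] y)) (g : c ⟶ (y ⟶[A] z)),
        (up f ⊗ₘ g) ≫ eComp A xa y z
          = up ((α_ a b c).inv ≫ (f ⊗ₘ g) ≫ eComp A x y z))) := by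
  constructor
  · rintro ⟨η, hη⟩
    have pa : ∀ {b b' : A} {y : X} (h : b' ⟶ b) (f : b ⟶ (xa ⟶[A] y)),
        (𝟙 a ⊗ₘ h) ≫ dn f = dn (h ≫ f) := by
      intro b b' y h f
      rw [hη, hη, ← Category.assoc, tensorHom_comp_tensorHom, Category.id_comp]
    have pc : ∀ {b c : A} {y z : X} (f : b ⟶ (xa ⟶[A] y)) (g : c ⟶ (y ⟶[A] z)),
        (dn f ⊗ₘ g) ≫ eComp A x y z
          = (α_ a b c).hom ≫ dn ((f ⊗ₘ g) ≫ eComp A xa y z) := by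
      intro b c y z f g
      rw [hη, hη]
      calc (((η ⊗ₘ f) ≫ eComp A x xa y) ⊗ₘ g) ≫ eComp A x y z
          = ((η ⊗ₘ f) ⊗ₘ g) ≫ (eComp A x xa y ⊗ₘ 𝟙 (y ⟶[A] z)) ≫ eComp A x y z := by
            rw [tensorHom_comp_tensorHom_assoc, Category.comp_id]
        _ = ((η ⊗ₘ f) ⊗ₘ g) ≫ eComp A x xa y ▷ (y ⟶[A] z) ≫ eComp A x y z := by
            rw [tensorHom_id]
        _ = ((η ⊗ₘ f) ⊗ₘ g) ≫ (α_ _ _ _).hom ≫ _ ◁ eComp A xa y z ≫ eComp A x xa z := by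
            rw [e_assoc']
        _ = (α_ a b c).hom ≫ (η ⊗ₘ (f ⊗ₘ g)) ≫ _ ◁ eComp A xa y z ≫ eComp A x xa z := by
            rw [← associator_naturality_assoc]
        _ = (α_ a b c).hom ≫ ((η ⊗ₘ (f ⊗ₘ g)) ≫ (𝟙 _ ⊗ₘ eComp A xa y z)) ≫ eComp A x xa z := by
            simp only [id_tensorHom, Category.assoc]
        _ = (α_ a b c).hom ≫ (η ⊗ₘ (f ⊗ₘ g) ≫ eComp A xa y z) ≫ eComp A x xa z := by
            rw [tensorHom_comp_tensorHom, Category.comp_id]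
    refine ⟨pa, ?_, pc, ?_⟩
    · intro b b' y h g
      conv_rhs => rw [← dn_up g]
      rw [pa, up_dn]
    · intro b c y z f g
      have h1 := pc (up f) g
      rw [dn_up] at h1
      have h2 : dn ((up f ⊗ₘ g) ≫ eComp A xa y z)
          = (α_ a b c).inv ≫ (f ⊗ₘ g) ≫ eComp A x y z := by
        rw [Iso.eq_inv_comp]; exact h1.symm
      rw [← up_dn ((up f ⊗ₘ g) ≫ eComp A xa y z), h2]
  · rintro ⟨pa, _, pc, _⟩
    refine ⟨(ρ_ a).inv ≫ dn (eId A xa), ?_⟩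
    intro b y f
    have hid : eId A xa ▷ (xa ⟶[A] y) ≫ eComp A xa xa y = (λ_ (xa ⟶[A] y)).hom := by
      have := e_id_comp A xa y
      rw [Iso.inv_comp_eq] at this
      simpa using this
    have h1 : (eId A xa ⊗ₘ f) ≫ eComp A xa xa y = (λ_ b).hom ≫ f := by
      rw [tensorHom_def', Category.assoc, hid, leftUnitor_naturality]
    calc dn f
        = ((ρ_ a).inv ⊗ₘ 𝟙 b) ≫ (α_ a (𝟙_ A) b).hom ≫ (𝟙 a ⊗ₘ (λ_ b).hom) ≫ dn f := by
          rw [id_tensorHom, MonoidalCategory.triangle_assoc, tensorHom_id,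
            ← comp_whiskerRight_assoc, Iso.inv_hom_id, id_whiskerRight, Category.id_comp]
      _ = ((ρ_ a).inv ⊗ₘ 𝟙 b) ≫ (α_ a (𝟙_ A) b).hom ≫ dn ((λ_ b).hom ≫ f) := by
          rw [pa]
      _ = ((ρ_ a).inv ⊗ₘ 𝟙 b) ≫ (α_ a (𝟙_ A) b).hom ≫ dn ((eId A xa ⊗ₘ f) ≫ eComp A xa xa y) := by
          rw [h1]
      _ = ((ρ_ a).inv ⊗ₘ 𝟙 b) ≫ (dn (eId A xa) ⊗ₘ f) ≫ eComp A x xa y := by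
          rw [pc]
      _ = (((ρ_ a).inv ≫ dn (eId A xa)) ⊗ₘ f) ≫ eComp A x xa y := by
          rw [tensorHom_comp_tensorHom_assoc, Category.id_comp]
end

section
/- In a right-closed monoidal category A, if γ : Hom(X ◁ A, Y) → A ⊸ Hom(X, Y) is A-natural in Y, then uncurry(γ) satisfies (uncurry(γ) ⊗ 1)m = α ∘ (1 ⊗ m) ∘ uncurry(γ), where α is the associator and m the enriched composition. -/
open CategoryTheory MonoidalCategory MonoidalClosed

universe v u w

variable {A : Type u} [Category.{v} A] [MonoidalCategory A] [MonoidalClosed A]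
variable {X : Type w} [EnrichedCategory A X]

/-- Composition for the self-enrichment of a right-closed monoidal category:
`m_⊸ : (a ⊸ b) ⊗ (b ⊸ c) ⟶ (a ⊸ c)`, i.e. `curry (α⁻¹ ≫ (ev ⊗ 1) ≫ ev)`. -/
noncomputable def mIhom (a b c : A) :
    (ihom a).obj b ⊗ (ihom b).obj c ⟶ (ihom a).obj c :=
  MonoidalClosed.curry
    ((α_ a ((ihom a).obj b) ((ihom b).obj c)).inv ≫
      ((ihom.ev a).app b ⊗ₘ 𝟙 ((ihom b).obj c)) ≫ (ihom.ev b).app c)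

/-- The action on hom-objects of the `A`-functor `Hom(w', -) : X ⟶ A`:
`G : Hom(w,y) ⟶ (Hom(w',w) ⊸ Hom(w',y))`, i.e. `curry m`. -/
noncomputable def homFunctorAct (w' w y : X) :
    (w ⟶[A] y) ⟶ (ihom ((w' ⟶[A] w))).obj (w' ⟶[A] y) :=
  MonoidalClosed.curry (eComp A w' w y)

/-- The action on hom-objects of the `A`-functor `a ⊸ Hom(x, -) : X ⟶ A`:
`F : Hom(w,y) ⟶ ((a ⊸ Hom(x,w)) ⊸ (a ⊸ Hom(x,y)))`, i.e.
`curry (curry (α⁻¹ ≫ (ev ⊗ 1) ≫ m))`. -/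
noncomputable def ihomHomFunctorAct (x : X) (a : A) (w y : X) :
    (w ⟶[A] y) ⟶
      (ihom ((ihom a).obj (x ⟶[A] w))).obj ((ihom a).obj (x ⟶[A] y)) :=
  MonoidalClosed.curry (MonoidalClosed.curry
    ((α_ a ((ihom a).obj (x ⟶[A] w)) (w ⟶[A] y)).inv ≫
      ((ihom.ev a).app (x ⟶[A] w) ⊗ₘ 𝟙 (w ⟶[A] y)) ≫ eComp A x w y))

/-- The component `γ_y` of a family `γ` as an element `⌜γ_y⌝ = curry (ρ ≫ γ_y)`. -/
noncomputable def gammaEl (x xa : X) (a : A)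
    (γ : ∀ y : X, (xa ⟶[A] y) ⟶ (ihom a).obj (x ⟶[A] y)) (y : X) :
    𝟙_ A ⟶ (ihom ((xa ⟶[A] y))).obj ((ihom a).obj (x ⟶[A] y)) :=
  MonoidalClosed.curry ((ρ_ (xa ⟶[A] y)).hom ≫ γ y)

/-- `A`-naturality (enriched naturality) in `Y` of a family
`γ : Hom(xa, Y) ⟶ (a ⊸ Hom(x, Y))`, between the `A`-functors `Hom(xa, -)` and
`a ⊸ Hom(x, -)`. -/
def ANaturalFamily (x xa : X) (a : A)
    (γ : ∀ y : X, (xa ⟶[A] y) ⟶ (ihom a).obj (x ⟶[A] y)) : Prop :=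
  ∀ w y : X,
    (ρ_ (w ⟶[A] y)).inv ≫ (homFunctorAct xa w y ⊗ₘ gammaEl x xa a γ y) ≫
        mIhom ((xa ⟶[A] w)) ((xa ⟶[A] y)) ((ihom a).obj (x ⟶[A] y))
      = (λ_ (w ⟶[A] y)).inv ≫ (gammaEl x xa a γ w ⊗ₘ ihomHomFunctorAct x a w y) ≫
          mIhom ((xa ⟶[A] w)) ((ihom a).obj (x ⟶[A] w)) ((ihom a).obj (x ⟶[A] y))

/-- if `γ : Hom(xa, Y) ⟶ (a ⊸ Hom(x, Y))` is `A`-natural in `Y`, then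
`(uncurry γ ⊗ 1) ≫ m = α ≫ (1 ⊗ m) ≫ uncurry γ`. -/
theorem uncurry_of_ANatural (x xa : X) (a : A)
    (γ : ∀ y : X, (xa ⟶[A] y) ⟶ (ihom a).obj (x ⟶[A] y))
    (hnat : ANaturalFamily x xa a γ) (y z : X) :
    (MonoidalClosed.uncurry (γ y) ⊗ₘ 𝟙 (y ⟶[A] z)) ≫ eComp A x y z
      = (α_ a (xa ⟶[A] y) (y ⟶[A] z)).hom ≫ (𝟙 a ⊗ₘ eComp A xa y z) ≫
          MonoidalClosed.uncurry (γ z) := by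
  have h := congrArg MonoidalClosed.uncurry (hnat y z)
  simp only [mIhom, homFunctorAct, ihomHomFunctorAct, gammaEl,
    MonoidalClosed.uncurry_natural_left, MonoidalClosed.uncurry_curry,
    MonoidalCategory.tensorHom_def, MonoidalCategory.whiskerLeft_comp, Category.assoc, Functor.id_obj,
    MonoidalCategory.whiskerLeft_id, Category.comp_id, Category.id_comp,
    associator_inv_naturality_middle_assoc, associator_inv_naturality_right_assoc,
    whisker_exchange_assoc] at h
  rw [← comp_whiskerRight_assoc, ← MonoidalClosed.uncurry_eq, MonoidalClosed.uncurry_curry,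
    ← comp_whiskerRight_assoc, ← MonoidalClosed.uncurry_eq, MonoidalClosed.uncurry_curry,
    ← MonoidalClosed.uncurry_eq, MonoidalClosed.uncurry_curry,
    ← MonoidalClosed.uncurry_eq, MonoidalClosed.uncurry_curry] at h
  simp only [comp_whiskerRight, rightUnitor_naturality, Category.assoc] at h
  simp at h
  have h2 := congrArg MonoidalClosed.uncurry h
  simp only [MonoidalClosed.uncurry_natural_left, MonoidalClosed.uncurry_curry,
    MonoidalCategory.whiskerLeft_comp, Category.assoc,
    associator_inv_naturality_middle_assoc, ← comp_whiskerRight_assoc,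
    ← MonoidalClosed.uncurry_eq] at h2
  simp only [tensorHom_id, id_tensorHom]
  rw [h2, Iso.hom_inv_id_assoc]
end
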